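/- Let K ⊆ ℝ^n be a nonempty closed set and f : ℝ^n → ℝ a polynomial of degree d ≥ 1. If f is bounded from below on K, then f_d(v) ≥ 0 for every v in the asymptotic cone K∞; in particular 0 ∈ Sol(K∞, f_d). Consequently, if Sol(K∞, f_d) = ∅ then f is not bounded from below on K and Sol(K,f) = ∅. -/

import Mathlib

/-! Write `x = t • u` with `u = t⁻¹ • x`. Splitting `f` into homogeneous components,
`t⁻ᵈ f(t • u) = ∑ⱼ t^(j-d) fⱼ(u)`, which tends to `f_d(v)` as `t → ∞` and `u → v`.
Along a sequence `x_k ∈ K` defining `v ∈ K∞`, a lower bound `B ≤ f(x_k)` gives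
`t_k⁻ᵈ B ≤ t_k⁻ᵈ f(x_k)`, and since `d ≥ 1` the left side tends to `0`; hence
`f_d(v) ≥ 0 = f_d(0)`. A minimizer of `f` on `K` would make `f` bounded below. -/

open Filter Topology MvPolynomial Bornology
open scoped RealInnerProductSpace Pointwise

noncomputable section

/-- `ℝ^n` as Euclidean space. -/
abbrev En (n : ℕ) := EuclideanSpace ℝ (Fin n)

/-- Evaluation of a multivariate polynomial at a point of `ℝ^n`. -/
def evalP {n : ℕ} (f : MvPolynomial (Fin n) ℝ) (x : En n) : ℝ :=
  MvPolynomial.eval (fun i => x i) f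

/-- `Sol(C,g)`: the set of global minimizers of `g` on `C`. -/
def solSet {n : ℕ} (C : Set (En n)) (g : En n → ℝ) : Set (En n) :=
  {x ∈ C | ∀ y ∈ C, g x ≤ g y}

/-- `K∞`: the asymptotic cone of `K`. -/
def asympCone {n : ℕ} (K : Set (En n)) : Set (En n) :=
  {v | ∃ (t : ℕ → ℝ) (x : ℕ → En n), (∀ k, x k ∈ K) ∧
    Tendsto t atTop atTop ∧ Tendsto (fun k => (t k)⁻¹ • x k) atTop (𝓝 v)}

/-- The gradient `∇f` of a polynomial, via its partial derivatives. -/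
def polyGrad {n : ℕ} (f : MvPolynomial (Fin n) ℝ) (x : En n) : En n :=
  WithLp.toLp 2 (fun i => MvPolynomial.eval (fun j => x j) (MvPolynomial.pderiv i f))

/-- The `ℓ2`-norm of the coefficient vector of a polynomial. -/
def l2Norm {n : ℕ} (p : MvPolynomial (Fin n) ℝ) : ℝ :=
  Real.sqrt (∑ m ∈ p.support, (MvPolynomial.coeff m p) ^ 2)

/-- `S` is generic (residual) in `X`: it contains a countable intersection of sets, each of
which is open and dense in `X` (with respect to the `ℓ2` coefficient metric). -/
def IsGenericIn {n : ℕ} (X S : Set (MvPolynomial (Fin n) ℝ)) : Prop :=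
  ∃ D : ℕ → Set (MvPolynomial (Fin n) ℝ),
    (∀ k, D k ⊆ X ∧
      (∀ g ∈ D k, ∃ ε > 0, ∀ g' ∈ X, l2Norm (g' - g) < ε → g' ∈ D k) ∧
      (∀ g ∈ X, ∀ ε > 0, ∃ g' ∈ D k, l2Norm (g' - g) < ε)) ∧
    X ∩ (⋂ k, D k) ⊆ S

theorem MvPolynomial.IsHomogeneous.eval_smul {σ R : Type*} [CommSemiring R]
    {p : MvPolynomial σ R} {j : ℕ} (hp : p.IsHomogeneous j) (c : R) (x : σ → R) :
    eval (c • x) p = c ^ j * eval x p := by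
  rw [eval_eq, eval_eq, Finset.mul_sum]
  refine Finset.sum_congr rfl fun m hm => ?_
  simp_rw [Pi.smul_apply, smul_eq_mul, mul_pow, Finset.prod_mul_distrib,
    Finset.prod_pow_eq_pow_sum, ← hp.degree_eq_sum_deg_support hm]
  ring

theorem evalP_smul_of_isHomogeneous {n j : ℕ} {p : MvPolynomial (Fin n) ℝ}
    (hp : p.IsHomogeneous j) (c : ℝ) (x : En n) :
    evalP p (c • x) = c ^ j * evalP p x :=
  hp.eval_smul c fun i => x i

theorem evalP_zero_of_isHomogeneous {n j : ℕ} {p : MvPolynomial (Fin n) ℝ}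
    (hp : p.IsHomogeneous j) (hj : j ≠ 0) : evalP p 0 = 0 := by
  simpa [zero_pow hj] using evalP_smul_of_isHomogeneous hp 0 0

theorem continuous_evalP {n : ℕ} (p : MvPolynomial (Fin n) ℝ) : Continuous (evalP p) :=
  p.continuous_eval.comp (PiLp.continuous_ofLp 2 _)

theorem evalP_smul_eq_sum {n d : ℕ} {f : MvPolynomial (Fin n) ℝ} (hf : f.totalDegree ≤ d)
    (t : ℝ) (u : En n) :
    evalP f (t • u) =
      ∑ j ∈ Finset.range (d + 1), t ^ j * evalP (homogeneousComponent j f) u := by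
  have hsum : ∑ j ∈ Finset.range (d + 1), homogeneousComponent j f = f := by
    rw [← Finset.sum_subset (Finset.range_subset_range.2 (Nat.succ_le_succ hf)),
      sum_homogeneousComponent]
    intro j _ hj
    exact homogeneousComponent_eq_zero _ _ (by simpa using hj)
  conv_lhs => rw [← hsum]
  simp only [evalP, map_sum]
  exact Finset.sum_congr rfl fun j _ =>
    evalP_smul_of_isHomogeneous (homogeneousComponent_isHomogeneous j f) t u

theorem inv_pow_mul_evalP_smul {n d : ℕ} {f : MvPolynomial (Fin n) ℝ}
    (hf : f.totalDegree ≤ d) {t : ℝ} (ht : t ≠ 0) (u : En n) :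
    t⁻¹ ^ d * evalP f (t • u) =
      ∑ j ∈ Finset.range (d + 1), t⁻¹ ^ (d - j) * evalP (homogeneousComponent j f) u := by
  rw [evalP_smul_eq_sum hf, Finset.mul_sum]
  refine Finset.sum_congr rfl fun j hj => ?_
  rw [pow_sub₀ _ (inv_ne_zero ht) (Nat.lt_succ_iff.1 (Finset.mem_range.1 hj)), inv_pow t j,
    inv_inv]
  ring

theorem tendsto_sum_pow_mul_evalP_homogeneousComponent {n d : ℕ} {α : Type*} {l : Filter α}
    (f : MvPolynomial (Fin n) ℝ) {s : α → ℝ} {u : α → En n} {v : En n}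
    (hs : Tendsto s l (𝓝 0)) (hu : Tendsto u l (𝓝 v)) :
    Tendsto (fun k => ∑ j ∈ Finset.range (d + 1),
        s k ^ (d - j) * evalP (homogeneousComponent j f) (u k))
      l (𝓝 (evalP (homogeneousComponent d f) v)) := by
  have hlim := tendsto_finsetSum (Finset.range (d + 1)) fun j _ =>
    (hs.pow (d - j)).mul (((continuous_evalP (homogeneousComponent j f)).tendsto v).comp hu)
  have hlower : ∀ j ∈ Finset.range (d + 1), j ≠ d →
      (0 : ℝ) ^ (d - j) * evalP (homogeneousComponent j f) v = 0 := fun j hj hjd => by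
    have hjd' : j < d := lt_of_le_of_ne (Nat.lt_succ_iff.1 (Finset.mem_range.1 hj)) hjd
    rw [zero_pow (Nat.sub_ne_zero_of_lt hjd'), zero_mul]
  rwa [Finset.sum_eq_single_of_mem d (Finset.self_mem_range_succ d) hlower, Nat.sub_self,
    pow_zero, one_mul] at hlim

theorem tendsto_inv_pow_mul_evalP {n d : ℕ} {f : MvPolynomial (Fin n) ℝ}
    (hf : f.totalDegree ≤ d) {t : ℕ → ℝ} {x : ℕ → En n} {v : En n}
    (ht : Tendsto t atTop atTop)
    (hx : Tendsto (fun k => (t k)⁻¹ • x k) atTop (𝓝 v)) :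
    Tendsto (fun k => (t k)⁻¹ ^ d * evalP f (x k)) atTop
      (𝓝 (evalP (homogeneousComponent d f) v)) := by
  refine (tendsto_sum_pow_mul_evalP_homogeneousComponent f ht.inv_tendsto_atTop hx).congr' ?_
  filter_upwards [ht.eventually_gt_atTop 0] with k hk
  rw [Pi.inv_apply, ← inv_pow_mul_evalP_smul hf hk.ne', smul_inv_smul₀ hk.ne']

theorem zero_mem_asympCone {n : ℕ} {K : Set (En n)} (hK : K.Nonempty) :
    (0 : En n) ∈ asympCone K := by
  obtain ⟨x₀, hx₀⟩ := hK
  have hN : Tendsto (fun k : ℕ => (k : ℝ)) atTop atTop := tendsto_natCast_atTop_atTop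
  refine ⟨fun k => k, fun _ => x₀, fun _ => hx₀, hN, ?_⟩
  simpa using (tendsto_inv_atTop_zero.comp hN).smul_const x₀

theorem evalP_homogeneousComponent_nonneg_of_mem_asympCone {n d : ℕ} {K : Set (En n)}
    {f : MvPolynomial (Fin n) ℝ} (hd : d ≠ 0) (hf : f.totalDegree ≤ d)
    (hbdd : BddBelow (evalP f '' K)) {v : En n} (hv : v ∈ asympCone K) :
    0 ≤ evalP (homogeneousComponent d f) v := by
  obtain ⟨B, hB⟩ := hbdd
  obtain ⟨t, x, hxK, ht, hx⟩ := hv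
  have hB0 : Tendsto (fun k => (t k)⁻¹ ^ d * B) atTop (𝓝 0) := by
    simpa [zero_pow hd] using (ht.inv_tendsto_atTop.pow d).mul_const B
  refine le_of_tendsto_of_tendsto hB0 (tendsto_inv_pow_mul_evalP hf ht hx) ?_
  filter_upwards [ht.eventually_gt_atTop 0] with k hk
  exact mul_le_mul_of_nonneg_left (hB ⟨x k, hxK k, rfl⟩) (by positivity)

theorem bddBelow_image_of_mem_solSet {n : ℕ} {C : Set (En n)} {g : En n → ℝ} {x : En n}
    (hx : x ∈ solSet C g) : BddBelow (g '' C) :=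
  ⟨g x, by rintro _ ⟨y, hy, rfl⟩; exact hx.2 y hy⟩

theorem stmt3_general {n d : ℕ} (hd : 1 ≤ d) (K : Set (En n)) (hKne : K.Nonempty)
    (f : MvPolynomial (Fin n) ℝ) (hdeg : f.totalDegree = d) :
    (BddBelow (evalP f '' K) →
      (∀ v ∈ asympCone K, 0 ≤ evalP (homogeneousComponent d f) v) ∧
      (0 : En n) ∈ solSet (asympCone K) (evalP (homogeneousComponent d f))) ∧
    (solSet (asympCone K) (evalP (homogeneousComponent d f)) = ∅ →
      ¬ BddBelow (evalP f '' K) ∧ solSet K (evalP f) = ∅) := by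
  have hd0 : d ≠ 0 := Nat.one_le_iff_ne_zero.1 hd
  have hnonneg (hb : BddBelow (evalP f '' K)) :
      ∀ v ∈ asympCone K, 0 ≤ evalP (homogeneousComponent d f) v := fun _ hv =>
    evalP_homogeneousComponent_nonneg_of_mem_asympCone hd0 hdeg.le hb hv
  have hsol (hb : BddBelow (evalP f '' K)) :
      (0 : En n) ∈ solSet (asympCone K) (evalP (homogeneousComponent d f)) :=
    ⟨zero_mem_asympCone hKne, fun v hv =>
      (evalP_zero_of_isHomogeneous (homogeneousComponent_isHomogeneous d f) hd0).trans_le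
        (hnonneg hb v hv)⟩
  refine ⟨fun hb => ⟨hnonneg hb, hsol hb⟩, fun hempty => ?_⟩
  have hunbdd : ¬ BddBelow (evalP f '' K) := fun hb => by simpa [hempty] using hsol hb
  exact ⟨hunbdd, Set.eq_empty_of_forall_notMem fun x hx =>
    hunbdd (bddBelow_image_of_mem_solSet hx)⟩

/-- If `f` is bounded from below on `K`, then `f_d ≥ 0` on `K∞` and `0 ∈ Sol(K∞, f_d)`.
Consequently, if `Sol(K∞, f_d) = ∅` then `f` is not bounded from below on `K` and
`Sol(K,f) = ∅`. -/
theorem stmt3 {n d : ℕ} (hd : 1 ≤ d) (K : Set (En n)) (hKne : K.Nonempty) (hKcl : IsClosed K)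
    (f : MvPolynomial (Fin n) ℝ) (hdeg : f.totalDegree = d) :
    (BddBelow (evalP f '' K) →
      (∀ v ∈ asympCone K, 0 ≤ evalP (homogeneousComponent d f) v) ∧
      (0 : En n) ∈ solSet (asympCone K) (evalP (homogeneousComponent d f))) ∧
    (solSet (asympCone K) (evalP (homogeneousComponent d f)) = ∅ →
      ¬ BddBelow (evalP f '' K) ∧ solSet K (evalP f) = ∅) :=
  stmt3_general hd K hKne f hdeg

end
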